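/- For every t > 0, every time-labelled ternary tree T compatible with horizon t, and every z ≥ 0, the majority voting procedure does not reduce the voting bias: P^t_z(T) ≥ ∫₀^∞ φ_{z,2t}(y) dy, i.e. P^t_z(T) is at least the probability that a rate-2 Brownian motion started at z is nonnegative at time t. -/
import Mathlib


open MeasureTheory

/-- Density of the normal distribution `N(m, v)` (`v` the variance). -/
noncomputable def gauss (m v x : ℝ) : ℝ :=
  (Real.sqrt (2 * Real.pi * v))⁻¹ * Real.exp (-(x - m) ^ 2 / (2 * v))

/-- The majority-vote probability for three independent Bernoulli votes
with success probabilities `p₁, p₂, p₃`. -/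
noncomputable def g3 (p₁ p₂ p₃ : ℝ) : ℝ :=
  p₁ * p₂ * p₃ + p₁ * p₂ * (1 - p₃) + p₂ * p₃ * (1 - p₁) + p₃ * p₁ * (1 - p₂)

/-- A time-labelled ternary tree: either a leaf, or a branch node carrying a
waiting time `τ` and three subtrees. -/
inductive TTree where
  | leaf : TTree
  | node (τ : ℝ) (T₁ T₂ T₃ : TTree) : TTree

/-- `T.compat t`: all waiting times are positive and along every root-to-leaf path
the waiting times sum to strictly less than the horizon `t` (in particular `t > 0`). -/
def TTree.compat : TTree → ℝ → Prop
  | .leaf, t => 0 < t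
  | .node τ T₁ T₂ T₃, t =>
      0 < τ ∧ τ < t ∧ T₁.compat (t - τ) ∧ T₂.compat (t - τ) ∧ T₃.compat (t - τ)

/-- The voting probability `P^t_z(T)`: recursively, a leaf contributes the probability
that a rate-2 Brownian motion started at `z` is `≥ 0` at time `t`, and a branch node
averages the majority vote of its three subtrees over the position at the branch time. -/
noncomputable def voteP : TTree → ℝ → ℝ → ℝ
  | .leaf, t, z => ∫ y in Set.Ioi (0 : ℝ), gauss z (2 * t) y
  | .node τ T₁ T₂ T₃, t, z =>
      ∫ y : ℝ, g3 (voteP T₁ (t - τ) y) (voteP T₂ (t - τ) y) (voteP T₃ (t - τ) y)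
        * gauss z (2 * τ) y

/-! ### Auxiliary lemmas -/

section Aux

open Set Real

lemma gauss_eq_pdf {v : ℝ} (hv : 0 < v) (m : ℝ) :
    gauss m v = ProbabilityTheory.gaussianPDFReal m ⟨v, hv.le⟩ := rfl

lemma gauss_nonneg (m v x : ℝ) : 0 ≤ gauss m v x :=
  mul_nonneg (inv_nonneg.2 (Real.sqrt_nonneg _)) (Real.exp_pos _).le

lemma integrable_gauss {v : ℝ} (hv : 0 < v) (m : ℝ) : Integrable (gauss m v) := by
  rw [gauss_eq_pdf hv]
  exact ProbabilityTheory.integrable_gaussianPDFReal m _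

lemma integral_gauss {v : ℝ} (hv : 0 < v) (m : ℝ) : ∫ x, gauss m v x = 1 := by
  rw [gauss_eq_pdf hv]
  exact ProbabilityTheory.integral_gaussianPDFReal_eq_one m
    (fun h => hv.ne' (congrArg NNReal.toReal h))

lemma gauss_symm (m v x : ℝ) : gauss m v x = gauss x v m := by
  unfold gauss; ring_nf

lemma gauss_neg (m v x : ℝ) : gauss (-m) v x = gauss m v (-x) := by
  unfold gauss; ring_nf

lemma continuous_gauss (v : ℝ) : Continuous fun p : ℝ × ℝ => gauss p.1 v p.2 := by
  unfold gauss; fun_prop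

/-- monotone comparison of mirrored gaussians -/
lemma gauss_reflect_le {v : ℝ} (hv : 0 < v) {z y : ℝ} (hz : 0 ≤ z) (hy : 0 ≤ y) :
    gauss (-z) v y ≤ gauss z v y := by
  unfold gauss
  apply mul_le_mul_of_nonneg_left _ (inv_nonneg.2 (Real.sqrt_nonneg _))
  apply Real.exp_le_exp.2
  have h4 : (0:ℝ) ≤ 4 * (y * z) := by positivity
  have hle : -(y - -z) ^ 2 ≤ -(y - z) ^ 2 := by nlinarith
  exact (div_le_div_iff_of_pos_right (by linarith : (0:ℝ) < 2 * v)).2 hle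

/-- pointwise product of two gaussian densities -/
lemma gauss_mul {v₁ v₂ : ℝ} (h₁ : 0 < v₁) (h₂ : 0 < v₂) (z w y : ℝ) :
    gauss w v₁ y * gauss z v₂ y
      = gauss z (v₁ + v₂) w * gauss ((v₂ * w + v₁ * z) / (v₁ + v₂)) (v₁ * v₂ / (v₁ + v₂)) y := by
  have hs : (0:ℝ) < v₁ + v₂ := by linarith
  unfold gauss
  rw [mul_mul_mul_comm, ← Real.exp_add, mul_mul_mul_comm, ← Real.exp_add,
    ← mul_inv, ← mul_inv, ← Real.sqrt_mul (by positivity), ← Real.sqrt_mul (by positivity)]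
  congr 2
  · field_simp
  · field_simp
    ring

lemma integral_gauss_mul {v₁ v₂ : ℝ} (h₁ : 0 < v₁) (h₂ : 0 < v₂) (z w : ℝ) :
    ∫ y, gauss w v₁ y * gauss z v₂ y = gauss z (v₁ + v₂) w := by
  simp_rw [gauss_mul h₁ h₂ z w]
  rw [integral_const_mul, integral_gauss (by positivity), mul_one]

/-- `Phi s z` : probability that `N(z, 2s) ≥ 0`. -/
noncomputable def Phi (s z : ℝ) : ℝ := ∫ y in Set.Ioi (0 : ℝ), gauss z (2 * s) y

lemma voteP_leaf (t z : ℝ) : voteP .leaf t z = Phi t z := rfl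

lemma Phi_nonneg (s z : ℝ) : 0 ≤ Phi s z :=
  setIntegral_nonneg measurableSet_Ioi fun y _ => gauss_nonneg _ _ _

lemma Phi_le_one {s : ℝ} (hs : 0 < s) (z : ℝ) : Phi s z ≤ 1 := by
  have h := setIntegral_le_integral (s := Set.Ioi (0:ℝ))
    (integrable_gauss (by linarith : (0:ℝ) < 2*s) z)
    (Filter.Eventually.of_forall fun y => gauss_nonneg _ _ _)
  rwa [integral_gauss (by linarith)] at h

lemma Phi_compl {s : ℝ} (hs : 0 < s) (z : ℝ) :
    ∫ y in Set.Iic (0:ℝ), gauss z (2 * s) y = 1 - Phi s z := by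
  have h := intervalIntegral.integral_Iic_add_Ioi (b := (0:ℝ)) (μ := volume)
    (integrable_gauss (by linarith : (0:ℝ) < 2*s) z).integrableOn
    (integrable_gauss (by linarith : (0:ℝ) < 2*s) z).integrableOn
  rw [integral_gauss (by linarith)] at h
  unfold Phi
  linarith

lemma Phi_reflect {s : ℝ} (hs : 0 < s) (z : ℝ) : Phi s (-z) = 1 - Phi s z := by
  have h1 : Phi s (-z) = ∫ y in Set.Ioi (0:ℝ), gauss z (2*s) (-y) := by
    unfold Phi
    exact setIntegral_congr_fun measurableSet_Ioi fun y _ => by rw [gauss_neg]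
  rw [h1, integral_comp_neg_Ioi, neg_zero, Phi_compl hs]

lemma Phi_half {s : ℝ} (hs : 0 < s) {z : ℝ} (hz : 0 ≤ z) : 1/2 ≤ Phi s z := by
  have hmono : Phi s (-z) ≤ Phi s z := by
    apply setIntegral_mono_on
      (integrable_gauss (by linarith : (0:ℝ) < 2*s) (-z)).integrableOn
      (integrable_gauss (by linarith : (0:ℝ) < 2*s) z).integrableOn
      measurableSet_Ioi
    intro y hy
    exact gauss_reflect_le (by linarith) hz (le_of_lt hy)
  rw [Phi_reflect hs] at hmono
  linarith

lemma stronglyMeasurable_Phi (s : ℝ) : StronglyMeasurable fun z => Phi s z := by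
  apply StronglyMeasurable.integral_prod_right'
    (f := fun p : ℝ × ℝ => gauss p.1 (2 * s) p.2)
  exact (continuous_gauss (2*s)).stronglyMeasurable

lemma integrable_bounded_mul_gauss {f : ℝ → ℝ} (hf : AEStronglyMeasurable f volume)
    (hb : ∀ y, ‖f y‖ ≤ 1) {v : ℝ} (hv : 0 < v) (m : ℝ) :
    Integrable (fun y => f y * gauss m v y) := by
  apply Integrable.mono (integrable_gauss hv m)
    (hf.mul (integrable_gauss hv m).aestronglyMeasurable)
  filter_upwards with y
  simp only [Pi.mul_apply, norm_mul]
  exact mul_le_of_le_one_left (norm_nonneg _) (hb y)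

/-- Chapman–Kolmogorov -/
lemma Phi_CK {s τ : ℝ} (hs : 0 < s) (hτ : 0 < τ) (z : ℝ) :
    ∫ y, Phi s y * gauss z (2 * τ) y = Phi (s + τ) z := by
  have h2s : (0:ℝ) < 2 * s := by linarith
  have h2τ : (0:ℝ) < 2 * τ := by linarith
  have hcont : Continuous fun p : ℝ × ℝ => gauss p.1 (2 * s) p.2 * gauss z (2 * τ) p.1 := by
    unfold gauss; fun_prop
  have hint : Integrable (fun p : ℝ × ℝ => gauss p.1 (2 * s) p.2 * gauss z (2 * τ) p.1)
      (volume.prod (volume.restrict (Set.Ioi (0:ℝ)))) := by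
    rw [integrable_prod_iff hcont.aestronglyMeasurable]
    constructor
    · filter_upwards with y
      exact ((integrable_gauss h2s y).integrableOn).mul_const _
    · have heq : ∀ y : ℝ, (∫ w in Set.Ioi (0:ℝ),
          ‖gauss y (2 * s) w * gauss z (2 * τ) y‖) = Phi s y * gauss z (2 * τ) y := by
        intro y
        have : ∀ w : ℝ, ‖gauss y (2 * s) w * gauss z (2 * τ) y‖
            = gauss y (2 * s) w * gauss z (2 * τ) y := fun w =>
          Real.norm_of_nonneg (mul_nonneg (gauss_nonneg _ _ _) (gauss_nonneg _ _ _))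
        simp_rw [this]
        rw [integral_mul_const]
        rfl
      exact (integrable_bounded_mul_gauss (stronglyMeasurable_Phi s).aestronglyMeasurable
          (fun y => by rw [Real.norm_of_nonneg (Phi_nonneg s y)]; exact Phi_le_one hs y) h2τ z).congr
        (Filter.Eventually.of_forall fun y => (heq y).symm)
  calc ∫ y, Phi s y * gauss z (2 * τ) y
      = ∫ y, ∫ w in Set.Ioi (0:ℝ), gauss y (2 * s) w * gauss z (2 * τ) y := by
        congr 1
        funext y
        rw [integral_mul_const]
        rfl
    _ = ∫ w in Set.Ioi (0:ℝ), ∫ y, gauss y (2 * s) w * gauss z (2 * τ) y :=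
        integral_integral_swap (f := fun y w => gauss y (2 * s) w * gauss z (2 * τ) y) hint
    _ = ∫ w in Set.Ioi (0:ℝ), gauss z (2 * s + 2 * τ) w := by
        apply setIntegral_congr_fun measurableSet_Ioi
        intro w _
        have : ∀ y : ℝ, gauss y (2 * s) w * gauss z (2 * τ) y
            = gauss w (2 * s) y * gauss z (2 * τ) y := fun y => by rw [gauss_symm y]
        simp_rw [this]
        exact integral_gauss_mul h2s h2τ z w
    _ = Phi (s + τ) z := by
        unfold Phi
        norm_num [mul_add]

lemma g3_compl (a b c : ℝ) : g3 (1-a) (1-b) (1-c) = 1 - g3 a b c := by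
  unfold g3; ring

lemma g3_nonneg {a b c : ℝ} (ha0 : 0 ≤ a) (ha1 : a ≤ 1) (hb0 : 0 ≤ b) (hb1 : b ≤ 1)
    (hc0 : 0 ≤ c) (hc1 : c ≤ 1) : 0 ≤ g3 a b c := by
  unfold g3
  have h1 : 0 ≤ a * b * c := by positivity
  have h2 : 0 ≤ a * b * (1 - c) := by
    apply mul_nonneg (by positivity); linarith
  have h3 : 0 ≤ b * c * (1 - a) := by
    apply mul_nonneg (by positivity); linarith
  have h4 : 0 ≤ c * a * (1 - b) := by
    apply mul_nonneg (by positivity); linarith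
  linarith

lemma g3_le_one {a b c : ℝ} (ha0 : 0 ≤ a) (ha1 : a ≤ 1) (hb0 : 0 ≤ b) (hb1 : b ≤ 1)
    (hc0 : 0 ≤ c) (hc1 : c ≤ 1) : g3 a b c ≤ 1 := by
  have h := g3_nonneg (a := 1-a) (b := 1-b) (c := 1-c)
    (by linarith) (by linarith) (by linarith) (by linarith) (by linarith) (by linarith)
  rw [g3_compl] at h
  linarith

lemma g3_mono {a a' b b' c c' : ℝ} (ha0 : 0 ≤ a) (hb0 : 0 ≤ b) (hc0 : 0 ≤ c)
    (ha : a ≤ a') (hb : b ≤ b') (hc : c ≤ c')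
    (ha1 : a' ≤ 1) (hb1 : b' ≤ 1) (hc1 : c' ≤ 1) :
    g3 a b c ≤ g3 a' b' c' := by
  have s1 : g3 a b c ≤ g3 a' b c := by
    unfold g3
    nlinarith [mul_nonneg (sub_nonneg.2 ha)
      (add_nonneg (mul_nonneg hb0 (by linarith : (0:ℝ) ≤ 1 - c))
        (mul_nonneg hc0 (by linarith : (0:ℝ) ≤ 1 - b)))]
  have s2 : g3 a' b c ≤ g3 a' b' c := by
    unfold g3
    nlinarith [mul_nonneg (sub_nonneg.2 hb)
      (add_nonneg (mul_nonneg (ha0.trans ha) (by linarith : (0:ℝ) ≤ 1 - c))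
        (mul_nonneg hc0 (by linarith : (0:ℝ) ≤ 1 - a')))]
  have s3 : g3 a' b' c ≤ g3 a' b' c' := by
    unfold g3
    nlinarith [mul_nonneg (sub_nonneg.2 hc)
      (add_nonneg (mul_nonneg (ha0.trans ha) (by linarith : (0:ℝ) ≤ 1 - b'))
        (mul_nonneg (hb0.trans hb) (by linarith : (0:ℝ) ≤ 1 - a')))]
  linarith

lemma g3_diag {p : ℝ} (h : 1/2 ≤ p) (h1 : p ≤ 1) : p ≤ g3 p p p := by
  unfold g3
  nlinarith [mul_nonneg (mul_nonneg (by linarith : (0:ℝ) ≤ p) (by linarith : (0:ℝ) ≤ 1 - p))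
    (by linarith : (0:ℝ) ≤ 2*p - 1)]

lemma stronglyMeasurable_voteP (T : TTree) (t : ℝ) :
    StronglyMeasurable fun z => voteP T t z := by
  induction T generalizing t with
  | leaf => exact stronglyMeasurable_Phi t
  | node τ T₁ T₂ T₃ ih₁ ih₂ ih₃ =>
    show StronglyMeasurable fun z => ∫ y : ℝ,
      g3 (voteP T₁ (t - τ) y) (voteP T₂ (t - τ) y) (voteP T₃ (t - τ) y) * gauss z (2 * τ) y
    apply StronglyMeasurable.integral_prod_right'
      (f := fun p : ℝ × ℝ =>
        g3 (voteP T₁ (t - τ) p.2) (voteP T₂ (t - τ) p.2) (voteP T₃ (t - τ) p.2)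
          * gauss p.1 (2 * τ) p.2)
    apply StronglyMeasurable.mul _ (continuous_gauss (2*τ)).stronglyMeasurable
    have hg3 : Continuous fun q : ℝ × ℝ × ℝ => g3 q.1 q.2.1 q.2.2 := by
      unfold g3; fun_prop
    exact hg3.comp_stronglyMeasurable
      ((((ih₁ (t-τ)).comp_measurable measurable_snd)).prodMk
        ((((ih₂ (t-τ)).comp_measurable measurable_snd)).prodMk
          (((ih₃ (t-τ)).comp_measurable measurable_snd))))

lemma voteP_bounds (T : TTree) {t : ℝ} (hT : T.compat t) (z : ℝ) :
    0 ≤ voteP T t z ∧ voteP T t z ≤ 1 := by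
  induction T generalizing t z with
  | leaf => exact ⟨Phi_nonneg _ _, Phi_le_one hT _⟩
  | node τ T₁ T₂ T₃ ih₁ ih₂ ih₃ =>
    obtain ⟨hτ, hτt, h1, h2, h3⟩ := hT
    have hG : ∀ y, 0 ≤ g3 (voteP T₁ (t-τ) y) (voteP T₂ (t-τ) y) (voteP T₃ (t-τ) y) ∧
        g3 (voteP T₁ (t-τ) y) (voteP T₂ (t-τ) y) (voteP T₃ (t-τ) y) ≤ 1 := by
      intro y
      obtain ⟨a0, a1⟩ := ih₁ h1 y
      obtain ⟨b0, b1⟩ := ih₂ h2 y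
      obtain ⟨c0, c1⟩ := ih₃ h3 y
      exact ⟨g3_nonneg a0 a1 b0 b1 c0 c1, g3_le_one a0 a1 b0 b1 c0 c1⟩
    have hint : Integrable (fun y =>
        g3 (voteP T₁ (t-τ) y) (voteP T₂ (t-τ) y) (voteP T₃ (t-τ) y) * gauss z (2*τ) y) := by
      apply integrable_bounded_mul_gauss _ _ (by linarith : (0:ℝ) < 2*τ)
      · have hg3 : Continuous fun q : ℝ × ℝ × ℝ => g3 q.1 q.2.1 q.2.2 := by
          unfold g3; fun_prop
        exact (hg3.comp_stronglyMeasurable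
          ((stronglyMeasurable_voteP T₁ (t-τ)).prodMk
            ((stronglyMeasurable_voteP T₂ (t-τ)).prodMk
              (stronglyMeasurable_voteP T₃ (t-τ))))).aestronglyMeasurable
      · intro y
        rw [Real.norm_of_nonneg (hG y).1]
        exact (hG y).2
    constructor
    · show (0:ℝ) ≤ ∫ y : ℝ, _
      apply integral_nonneg
      intro y
      exact mul_nonneg (hG y).1 (gauss_nonneg _ _ _)
    · show (∫ y : ℝ, _) ≤ (1:ℝ)
      calc (∫ y : ℝ, g3 (voteP T₁ (t-τ) y) (voteP T₂ (t-τ) y) (voteP T₃ (t-τ) y)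
              * gauss z (2*τ) y)
          ≤ ∫ y : ℝ, gauss z (2*τ) y := by
            apply integral_mono hint (integrable_gauss (by linarith) z)
            intro y
            calc g3 _ _ _ * gauss z (2*τ) y ≤ 1 * gauss z (2*τ) y :=
                  mul_le_mul_of_nonneg_right (hG y).2 (gauss_nonneg _ _ _)
              _ = gauss z (2*τ) y := one_mul _
        _ = 1 := integral_gauss (by linarith) z

lemma stronglyMeasurable_G (T₁ T₂ T₃ : TTree) (s : ℝ) :
    StronglyMeasurable fun y => g3 (voteP T₁ s y) (voteP T₂ s y) (voteP T₃ s y) := by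
  have hg3 : Continuous fun q : ℝ × ℝ × ℝ => g3 q.1 q.2.1 q.2.2 := by
    unfold g3; fun_prop
  exact hg3.comp_stronglyMeasurable
    ((stronglyMeasurable_voteP T₁ s).prodMk
      ((stronglyMeasurable_voteP T₂ s).prodMk (stronglyMeasurable_voteP T₃ s)))

lemma integrable_G (T₁ T₂ T₃ : TTree) {s : ℝ} (h1 : T₁.compat s) (h2 : T₂.compat s)
    (h3 : T₃.compat s) {v : ℝ} (hv : 0 < v) (m : ℝ) :
    Integrable (fun y => g3 (voteP T₁ s y) (voteP T₂ s y) (voteP T₃ s y) * gauss m v y) := by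
  apply integrable_bounded_mul_gauss (stronglyMeasurable_G T₁ T₂ T₃ s).aestronglyMeasurable _ hv
  intro y
  obtain ⟨a0, a1⟩ := voteP_bounds T₁ h1 y
  obtain ⟨b0, b1⟩ := voteP_bounds T₂ h2 y
  obtain ⟨c0, c1⟩ := voteP_bounds T₃ h3 y
  rw [Real.norm_of_nonneg (g3_nonneg a0 a1 b0 b1 c0 c1)]
  exact g3_le_one a0 a1 b0 b1 c0 c1

lemma voteP_reflect (T : TTree) {t : ℝ} (hT : T.compat t) (z : ℝ) :
    voteP T t (-z) = 1 - voteP T t z := by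
  induction T generalizing t z with
  | leaf => exact Phi_reflect hT z
  | node τ T₁ T₂ T₃ ih₁ ih₂ ih₃ =>
    obtain ⟨hτ, hτt, h1, h2, h3⟩ := hT
    have h2τ : (0:ℝ) < 2 * τ := by linarith
    show (∫ y : ℝ, g3 (voteP T₁ (t - τ) y) (voteP T₂ (t - τ) y) (voteP T₃ (t - τ) y)
        * gauss (-z) (2 * τ) y)
      = 1 - ∫ y : ℝ, g3 (voteP T₁ (t - τ) y) (voteP T₂ (t - τ) y) (voteP T₃ (t - τ) y)
        * gauss z (2 * τ) y
    rw [← integral_neg_eq_self (fun y => g3 (voteP T₁ (t - τ) y) (voteP T₂ (t - τ) y)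
      (voteP T₃ (t - τ) y) * gauss (-z) (2 * τ) y) volume]
    have key : ∀ y : ℝ, g3 (voteP T₁ (t - τ) (-y)) (voteP T₂ (t - τ) (-y))
        (voteP T₃ (t - τ) (-y)) * gauss (-z) (2 * τ) (-y)
        = gauss z (2 * τ) y - g3 (voteP T₁ (t - τ) y) (voteP T₂ (t - τ) y)
            (voteP T₃ (t - τ) y) * gauss z (2 * τ) y := by
      intro y
      rw [ih₁ h1, ih₂ h2, ih₃ h3, g3_compl, gauss_neg, neg_neg]
      ring
    simp_rw [key]
    rw [integral_sub (integrable_gauss h2τ z) (integrable_G T₁ T₂ T₃ h1 h2 h3 h2τ z),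
      integral_gauss h2τ z]

/-- The key induction: for nonnegative starting points the vote probability dominates `Phi`. -/
lemma voteP_ge (T : TTree) {t : ℝ} (hT : T.compat t) {z : ℝ} (hz : 0 ≤ z) :
    Phi t z ≤ voteP T t z := by
  induction T generalizing t z with
  | leaf => exact le_refl _
  | node τ T₁ T₂ T₃ ih₁ ih₂ ih₃ =>
    obtain ⟨hτ, hτt, h1, h2, h3⟩ := hT
    have hs : 0 < t - τ := by linarith
    have h2τ : (0:ℝ) < 2 * τ := by linarith
    show Phi t z ≤ ∫ y : ℝ, g3 (voteP T₁ (t - τ) y) (voteP T₂ (t - τ) y)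
      (voteP T₃ (t - τ) y) * gauss z (2 * τ) y
    have hCK : Phi t z = ∫ y, Phi (t - τ) y * gauss z (2 * τ) y := by
      rw [Phi_CK hs hτ z, sub_add_cancel]
    rw [hCK, ← sub_nonneg]
    have hGint := integrable_G T₁ T₂ T₃ h1 h2 h3 h2τ z
    have hPint : Integrable (fun y => Phi (t - τ) y * gauss z (2 * τ) y) :=
      integrable_bounded_mul_gauss (stronglyMeasurable_Phi (t - τ)).aestronglyMeasurable
        (fun y => by rw [Real.norm_of_nonneg (Phi_nonneg _ y)]; exact Phi_le_one hs y) h2τ z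
    rw [← integral_sub hGint hPint]
    set D : ℝ → ℝ := fun y => g3 (voteP T₁ (t - τ) y) (voteP T₂ (t - τ) y)
      (voteP T₃ (t - τ) y) - Phi (t - τ) y with hD
    have hDsm : StronglyMeasurable D :=
      (stronglyMeasurable_G T₁ T₂ T₃ (t - τ)).sub (stronglyMeasurable_Phi (t - τ))
    have hDb : ∀ y, ‖D y‖ ≤ 1 := by
      intro y
      obtain ⟨a0, a1⟩ := voteP_bounds T₁ h1 y
      obtain ⟨b0, b1⟩ := voteP_bounds T₂ h2 y
      obtain ⟨c0, c1⟩ := voteP_bounds T₃ h3 y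
      have hg0 := g3_nonneg a0 a1 b0 b1 c0 c1
      have hg1 := g3_le_one a0 a1 b0 b1 c0 c1
      have hp0 := Phi_nonneg (t - τ) y
      have hp1 := Phi_le_one hs y
      rw [Real.norm_eq_abs, abs_le]
      constructor <;> simp only [hD] <;> linarith
    have hDint : ∀ m : ℝ, Integrable (fun y => D y * gauss m (2 * τ) y) := fun m =>
      integrable_bounded_mul_gauss hDsm.aestronglyMeasurable hDb h2τ m
    have hintegrand : ∀ y : ℝ, g3 (voteP T₁ (t - τ) y) (voteP T₂ (t - τ) y)
        (voteP T₃ (t - τ) y) * gauss z (2 * τ) y - Phi (t - τ) y * gauss z (2 * τ) y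
        = D y * gauss z (2 * τ) y := fun y => by rw [hD]; ring
    simp_rw [hintegrand]
    have hDodd : ∀ y : ℝ, D (-y) = -D y := by
      intro y
      simp only [hD]
      rw [voteP_reflect T₁ h1, voteP_reflect T₂ h2, voteP_reflect T₃ h3, g3_compl,
        Phi_reflect hs]
      ring
    have hDpos : ∀ y ∈ Set.Ioi (0:ℝ), 0 ≤ D y := by
      intro y hy
      have hy' : (0:ℝ) ≤ y := le_of_lt hy
      obtain ⟨a0, a1⟩ := voteP_bounds T₁ h1 y
      obtain ⟨b0, b1⟩ := voteP_bounds T₂ h2 y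
      obtain ⟨c0, c1⟩ := voteP_bounds T₃ h3 y
      have hp2 := Phi_half hs hy'
      have hp1 := Phi_le_one hs y
      have hp0 := Phi_nonneg (t - τ) y
      have step1 : Phi (t - τ) y ≤ g3 (Phi (t - τ) y) (Phi (t - τ) y) (Phi (t - τ) y) :=
        g3_diag hp2 hp1
      have step2 : g3 (Phi (t - τ) y) (Phi (t - τ) y) (Phi (t - τ) y)
          ≤ g3 (voteP T₁ (t - τ) y) (voteP T₂ (t - τ) y) (voteP T₃ (t - τ) y) :=
        g3_mono hp0 hp0 hp0 (ih₁ h1 hy') (ih₂ h2 hy') (ih₃ h3 hy') a1 b1 c1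
      simp only [hD]
      linarith
    rw [← intervalIntegral.integral_Iic_add_Ioi (hDint z).integrableOn (hDint z).integrableOn]
    have hIic : (∫ y in Set.Iic (0:ℝ), D y * gauss z (2 * τ) y)
        = ∫ y in Set.Ioi (0:ℝ), -(D y * gauss (-z) (2 * τ) y) := by
      have hneg := integral_comp_neg_Ioi (0:ℝ) (fun y => D y * gauss z (2 * τ) y)
      rw [neg_zero] at hneg
      rw [← hneg]
      apply setIntegral_congr_fun measurableSet_Ioi
      intro y _
      show D (-y) * gauss z (2 * τ) (-y) = -(D y * gauss (-z) (2 * τ) y)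
      rw [hDodd y, ← gauss_neg]
      ring
    rw [hIic, integral_neg, neg_add_eq_sub, ← integral_sub (hDint z).integrableOn
      (hDint (-z)).integrableOn]
    apply setIntegral_nonneg measurableSet_Ioi
    intro y hy
    have hgg : gauss (-z) (2 * τ) y ≤ gauss z (2 * τ) y :=
      gauss_reflect_le h2τ hz (le_of_lt hy)
    have := hDpos y hy
    nlinarith

end Aux

theorem voteP_no_demagnification (t : ℝ) (ht : 0 < t) (T : TTree) (hT : T.compat t)
    (z : ℝ) (hz : 0 ≤ z) :
    (∫ y in Set.Ioi (0 : ℝ), gauss z (2 * t) y) ≤ voteP T t z :=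
  voteP_ge T hT hz
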